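/- arXiv:hep-th/9903250 — 3 statements merged into one kernel-verified Lean document; each statement's English description precedes it below -/
import Mathlib

section
/- For a field k of characteristic 0 and n ≥ 1, there is an injective k-algebra homomorphism k[x]/(x^{n+1}) → k[x₁,…,xₙ]/(x₁²,…,xₙ²) sending x to x₁ + ⋯ + xₙ. More generally, k[x₁,…,x_r]/(x₁^{n+1},…,x_r^{n+1}) embeds into k[x_{ij} : 1≤i≤r, 1≤j≤n]/(x_{ij}²) via xᵢ ↦ x_{i1} + ⋯ + x_{in}. -/
/-!
Sending `xᵢ ↦ xᵢ₁ + ⋯ + xᵢₙ` is well defined because a sum of `n` square-zero elements of a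
commutative ring has vanishing `(n+1)`-st power. For injectivity, every element of
`k[x₁,…,x_r]/(xᵢ^{n+1})` outside the ideal has a multiple equal to a nonzero scalar times the socle
monomial `∏ xᵢⁿ` (multiply a minimal surviving monomial up to it), so it suffices that the socle
monomial survives. It does: since `(∑ⱼ xᵢⱼ)ⁿ = n! ∏ⱼ xᵢⱼ` modulo the squares, it maps to
`(n!)^r ∏ xᵢⱼ`, which is nonzero in characteristic zero.
-/

open MvPolynomial

section SquareZero

variable {ι R : Type*} [CommSemiring R]

theorem add_pow_succ_of_sq_eq_zero {y z : R} (hz : z ^ 2 = 0) (m : ℕ) :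
    (y + z) ^ (m + 1) = y ^ (m + 1) + (m + 1) * y ^ m * z := by
  induction m with
  | zero => simp
  | succ m ih =>
    calc (y + z) ^ (m + 1 + 1) = (y ^ (m + 1) + (m + 1) * y ^ m * z) * (y + z) := by
          rw [pow_succ, ih]
      _ = y ^ (m + 1 + 1) + (m + 1 + 1) * y ^ (m + 1) * z + (m + 1) * y ^ m * z ^ 2 := by
          ring
      _ = _ := by rw [hz]; push_cast; ring

variable {s : Finset ι} {x : ι → R}

theorem Finset.sum_pow_card_succ_eq_zero_of_sq_eq_zero (hx : ∀ i ∈ s, x i ^ 2 = 0) :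
    (∑ i ∈ s, x i) ^ (s.card + 1) = 0 := by
  classical
  induction s using Finset.induction with
  | empty => simp
  | @insert a s ha ih =>
    rw [Finset.sum_insert ha, Finset.card_insert_of_notMem ha]
    exact (Commute.all _ _).add_pow_eq_zero_of_add_le_succ_of_pow_eq_zero
      (hx a (Finset.mem_insert_self a s)) (ih fun i hi => hx i (Finset.mem_insert_of_mem hi))
      (by omega)

theorem Finset.sum_pow_card_of_sq_eq_zero (hx : ∀ i ∈ s, x i ^ 2 = 0) :
    (∑ i ∈ s, x i) ^ s.card = s.card.factorial * ∏ i ∈ s, x i := by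
  classical
  induction s using Finset.induction with
  | empty => simp
  | @insert a s ha ih =>
    have hs : ∀ i ∈ s, x i ^ 2 = 0 := fun i hi => hx i (Finset.mem_insert_of_mem hi)
    rw [Finset.sum_insert ha, Finset.card_insert_of_notMem ha, Finset.prod_insert ha, add_comm,
      add_pow_succ_of_sq_eq_zero (hx a (Finset.mem_insert_self a s)),
      Finset.sum_pow_card_succ_eq_zero_of_sq_eq_zero hs, ih hs, Nat.factorial_succ]
    push_cast
    ring

end SquareZero

namespace MvPolynomial

variable {σ R : Type*}

theorem mem_span_range_X_pow_iff [CommSemiring R] (e : σ → ℕ) (q : MvPolynomial σ R) :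
    q ∈ Ideal.span (Set.range fun i => X i ^ e i) ↔ ∀ m ∈ q.support, ∃ i, e i ≤ m i := by
  have : Set.range (fun i => (X i : MvPolynomial σ R) ^ e i) =
      (fun m => monomial m 1) '' Set.range fun i => Finsupp.single i (e i) := by
    rw [← Set.range_comp]
    congr 1
    funext i
    exact X_pow_eq_monomial
  simp only [this, mem_ideal_span_monomial_image, Set.exists_range_iff, Finsupp.single_le_iff]

theorem monomial_notMem_span_range_X_pow [CommSemiring R] {e : σ → ℕ} {m : σ →₀ ℕ} {c : R}
    (hc : c ≠ 0) (hm : ∀ i, m i < e i) :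
    monomial m c ∉ Ideal.span (Set.range fun i => (X i : MvPolynomial σ R) ^ e i) := by
  classical
  simpa [mem_span_range_X_pow_iff, support_monomial, hc] using hm

theorem exists_mul_monomial_sub_monomial_mem_span_range_X_pow [CommRing R] {e : σ →₀ ℕ}
    {p : MvPolynomial σ R} (hp : p ∉ Ideal.span (Set.range fun i => X i ^ (e i + 1))) :
    ∃ c ≠ 0, ∃ m, p * monomial m 1 - monomial e c ∈
      Ideal.span (Set.range fun i => X i ^ (e i + 1)) := by
  classical
  obtain ⟨a, ha⟩ : ∃ a, Minimal (fun b => b ∈ p.support ∧ b ≤ e) a := by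
    apply exists_minimal_of_wellFoundedLT
    simpa [mem_span_range_X_pow_iff, Nat.succ_le_iff, Finsupp.le_def] using hp
  refine ⟨coeff a p, mem_support_iff.mp ha.prop.1, e - a, ?_⟩
  rw [mem_span_range_X_pow_iff]
  intro m hm
  by_contra! hme
  replace hme : m ≤ e := fun i => Nat.lt_succ_iff.mp (hme i)
  rw [mem_support_iff, coeff_sub, coeff_mul_monomial', coeff_monomial, mul_one] at hm
  by_cases hm_e : e = m
  · subst hm_e
    simp [tsub_tsub_cancel_of_le ha.prop.2] at hm
  · rw [if_neg hm_e, sub_zero] at hm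
    split_ifs at hm with hle
    · -- `m - (e - a) ≤ a` lies in the support below `e`, so minimality of `a` forces `m = e`.
      have hb : m - (e - a) = a := ha.eq_of_le ⟨mem_support_iff.mpr hm,
        (tsub_le_tsub_right hme _).trans tsub_le_self⟩
        ((tsub_le_tsub_right hme _).trans (tsub_tsub_cancel_of_le ha.prop.2).le)
      apply hm_e
      rw [← tsub_add_cancel_of_le hle, hb, add_tsub_cancel_of_le ha.prop.2]
    · exact hm rfl

end MvPolynomial

section BlockSum

variable (R : Type*) [CommRing R] (r n : ℕ)

noncomputable abbrev squareIdeal (σ : Type*) : Ideal (MvPolynomial σ R) :=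
  Ideal.span (Set.range fun p => X p ^ 2)

noncomputable def blockSum : MvPolynomial (Fin r) R →ₐ[R] MvPolynomial (Fin r × Fin n) R :=
  aeval fun i => ∑ j, X (i, j)

variable {R r n}

theorem mk_X_sq_eq_zero {σ : Type*} (p : σ) :
    Ideal.Quotient.mk (squareIdeal R σ) (X p) ^ 2 = 0 := by
  rw [← map_pow, Ideal.Quotient.eq_zero_iff_mem]
  exact Ideal.subset_span ⟨p, rfl⟩

theorem mk_blockSum_X (i : Fin r) :
    Ideal.Quotient.mk (squareIdeal R (Fin r × Fin n)) (blockSum R r n (X i)) =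
      ∑ j, Ideal.Quotient.mk (squareIdeal R (Fin r × Fin n)) (X (i, j)) := by
  rw [blockSum, aeval_X, map_sum]

theorem span_X_pow_succ_le_comap_blockSum :
    Ideal.span (Set.range fun i : Fin r => (X i : MvPolynomial (Fin r) R) ^ (n + 1)) ≤
      (squareIdeal R (Fin r × Fin n)).comap (blockSum R r n) := by
  rw [Ideal.span_le]
  rintro _ ⟨i, rfl⟩
  rw [SetLike.mem_coe, Ideal.mem_comap, ← Ideal.Quotient.eq_zero_iff_mem, map_pow, map_pow,
    mk_blockSum_X]
  have := Finset.sum_pow_card_succ_eq_zero_of_sq_eq_zero (s := (Finset.univ : Finset (Fin n)))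
    fun j _ => mk_X_sq_eq_zero (R := R) (i, j)
  rwa [Finset.card_univ, Fintype.card_fin] at this

theorem mk_blockSum_X_pow (i : Fin r) :
    Ideal.Quotient.mk (squareIdeal R (Fin r × Fin n)) (blockSum R r n (X i ^ n)) =
      n.factorial * ∏ j, Ideal.Quotient.mk (squareIdeal R (Fin r × Fin n)) (X (i, j)) := by
  rw [map_pow, map_pow, mk_blockSum_X]
  have := Finset.sum_pow_card_of_sq_eq_zero (s := (Finset.univ : Finset (Fin n)))
    fun j _ => mk_X_sq_eq_zero (R := R) (i, j)
  rwa [Finset.card_univ, Fintype.card_fin] at this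

theorem mk_blockSum_monomial (c : R) :
    Ideal.Quotient.mk (squareIdeal R (Fin r × Fin n))
      (blockSum R r n (monomial (Finsupp.equivFunOnFinite.symm fun _ => n) c)) =
      Ideal.Quotient.mk (squareIdeal R (Fin r × Fin n)) (C (c * n.factorial ^ r) * ∏ p, X p) := by
  have hC : blockSum R r n (C c) = C c := aeval_C _ _
  rw [monomial_eq, Finsupp.prod_fintype _ _ fun _ => pow_zero _, map_mul, map_mul, hC, map_prod,
    map_prod]
  simp only [Finsupp.coe_equivFunOnFinite_symm, mk_blockSum_X_pow]
  rw [Finset.prod_mul_distrib, Finset.prod_const, Finset.card_univ, Fintype.card_fin,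
    Fintype.prod_prod_type, map_mul, map_mul C, map_mul]
  simp only [map_prod, map_pow, map_natCast]
  ring

theorem mk_blockSum_monomial_ne_zero [IsDomain R] [CharZero R] {c : R} (hc : c ≠ 0) :
    Ideal.Quotient.mk (squareIdeal R (Fin r × Fin n))
      (blockSum R r n (monomial (Finsupp.equivFunOnFinite.symm fun _ => n) c)) ≠ 0 := by
  classical
  have hprod : ∏ p : Fin r × Fin n, (X p : MvPolynomial (Fin r × Fin n) R) =
      monomial (∑ p, Finsupp.single p 1) 1 := by
    rw [monomial_sum_one]; rfl
  rw [mk_blockSum_monomial, hprod, C_mul_monomial, mul_one, Ne, Ideal.Quotient.eq_zero_iff_mem]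
  refine monomial_notMem_span_range_X_pow (by simp [hc, Nat.factorial_ne_zero]) fun p => ?_
  simp [Finsupp.finsetSum_apply, Finsupp.single_apply]

theorem comap_blockSum_le [IsDomain R] [CharZero R] :
    (squareIdeal R (Fin r × Fin n)).comap (blockSum R r n) ≤
      Ideal.span (Set.range fun i : Fin r => (X i : MvPolynomial (Fin r) R) ^ (n + 1)) := by
  intro p hp
  by_contra hpI
  obtain ⟨c, hc, m, hmem⟩ := exists_mul_monomial_sub_monomial_mem_span_range_X_pow
    (e := Finsupp.equivFunOnFinite.symm fun _ => n) hpI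
  have hpm : blockSum R r n (p * monomial m 1) ∈ squareIdeal R (Fin r × Fin n) := by
    rw [map_mul]
    exact Ideal.mul_mem_right _ _ hp
  have hsub := Ideal.sub_mem _ hpm (span_X_pow_succ_le_comap_blockSum hmem)
  rw [← map_sub, sub_sub_cancel, ← Ideal.Quotient.eq_zero_iff_mem] at hsub
  exact mk_blockSum_monomial_ne_zero hc hsub

end BlockSum

theorem embedding_truncated_polynomials_into_dual_numbers_general
    (k : Type*) [Field k] [CharZero k] (n r : ℕ) :
    ∃ φ : (MvPolynomial (Fin r) k ⧸
        Ideal.span (Set.range fun i : Fin r => (X i : MvPolynomial (Fin r) k) ^ (n + 1)))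
      →ₐ[k] (MvPolynomial (Fin r × Fin n) k ⧸
        Ideal.span (Set.range fun p : Fin r × Fin n =>
          (X p : MvPolynomial (Fin r × Fin n) k) ^ 2)),
      Function.Injective φ ∧
      ∀ i : Fin r,
        φ (Ideal.Quotient.mk _ (X i)) =
          Ideal.Quotient.mk _ (∑ j : Fin n, X (i, j)) :=
  ⟨Ideal.quotientMapₐ _ (blockSum k r n) span_X_pow_succ_le_comap_blockSum,
    Ideal.quotientMap_injective' (H := span_X_pow_succ_le_comap_blockSum) comap_blockSum_le,
    fun i => by rw [Ideal.quotient_map_mkₐ, Ideal.Quotient.mkₐ_eq_mk, blockSum, aeval_X]⟩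

/-- For a field `k` of characteristic `0`, the `k`-algebra
`k[x₁,…,x_r]/(x₁^{n+1},…,x_r^{n+1})` embeds into
`k[x_{ij} : 1 ≤ i ≤ r, 1 ≤ j ≤ n]/(x_{ij}²)` via `xᵢ ↦ x_{i1} + ⋯ + x_{in}`
(in particular, for `r = 1`, `k[x]/(x^{n+1}) ↪ k[x₁,…,xₙ]/(x₁²,…,xₙ²)`,
`x ↦ x₁ + ⋯ + xₙ`). -/
theorem embedding_truncated_polynomials_into_dual_numbers
    (k : Type*) [Field k] [CharZero k] (n r : ℕ) (hn : 1 ≤ n) :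
    ∃ φ : (MvPolynomial (Fin r) k ⧸
        Ideal.span (Set.range fun i : Fin r => (X i : MvPolynomial (Fin r) k) ^ (n + 1)))
      →ₐ[k] (MvPolynomial (Fin r × Fin n) k ⧸
        Ideal.span (Set.range fun p : Fin r × Fin n =>
          (X p : MvPolynomial (Fin r × Fin n) k) ^ 2)),
      Function.Injective φ ∧
      ∀ i : Fin r,
        φ (Ideal.Quotient.mk _ (X i)) =
          Ideal.Quotient.mk _ (∑ j : Fin n, X (i, j)) :=
  embedding_truncated_polynomials_into_dual_numbers_general k n r
end

section
/- Let F be a group-valued functor on local Artinian k-algebras arising from a formal group (pro-representable, smooth, F(k) trivial). For any A in C_a and ideal I ⊆ A with I² = 0, the sequence of groups 0 → F(k[I]) → F(A) → F(A/I) → 0 is exact. -/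
open CategoryTheory CategoryTheory.Limits

/-- The defining property of the category `C_a`: a commutative `k`-algebra which is
Artinian, local, and has residue field `k`. -/
def CaProp (k : Type) [Field k] : Under (CommRingCat.of k) → Prop := fun X =>
  IsArtinianRing X.right ∧ IsLocalRing X.right ∧
    ∀ a : X.right, ∃! c : k, (a - (show X.right from X.hom c)) ∈ nonunits X.right

/-- The category `C_a` of local Artinian `k`-algebras with residue field `k`. -/
def Ca (k : Type) [Field k] := CategoryTheory.ObjectProperty.FullSubcategory (CaProp k)

instance (k : Type) [Field k] : Category (Ca k) :=
  CategoryTheory.ObjectProperty.FullSubcategory.category (CaProp k)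

/-- A set-valued functor on `C_a` is pro-representable if it is a filtered colimit of
corepresentable functors. -/
def ProRepresentable {k : Type} [Field k] (F : Ca k ⥤ Type) : Prop :=
  ∃ (I : Type) (_ : SmallCategory I) (_ : IsFiltered I) (S : I ⥤ (Ca k)ᵒᵖ),
    Nonempty (F ≅ colimit (S ⋙ coyoneda))

section Hom
variable {k : Type} [Field k]

def caHomMk {X Y : Ca k} (f : X.obj.right →+* Y.obj.right)
    (w : ∀ c : k, f (X.obj.hom c) = Y.obj.hom c) : X ⟶ Y :=
  ObjectProperty.homMk (Under.homMk (CommRingCat.ofHom f) (by ext c; exact w c))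

lemma caHom_w {X Y : Ca k} (f : X ⟶ Y) (c : k) :
    f.hom.right (X.obj.hom c) = Y.obj.hom c := by
  rw [← Under.w f.hom]; rfl

lemma caHomMk_right {X Y : Ca k} (f : X.obj.right →+* Y.obj.right) (w) (x : X.obj.right) :
    (caHomMk f w).hom.right x = f x := rfl

lemma caComp_right {X Y Z : Ca k} (f : X ⟶ Y) (g : Y ⟶ Z) (x : X.obj.right) :
    (f ≫ g).hom.right x = g.hom.right (f.hom.right x) := rfl

end Hom

section Aux
variable {k : Type} [Field k]

lemma ca_nontrivial (A : Ca k) : Nontrivial A.obj.right := by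
  by_contra h
  rw [not_nontrivial_iff_subsingleton] at h
  obtain ⟨c, hc, -⟩ := A.property.2.2 0
  exact hc (isUnit_of_subsingleton _)

variable (A : Ca k) (I : Ideal A.obj.right)

lemma hom_k_mem_I_eq_zero (hI : I * I = ⊥) (c : k) (hc : (A.obj.hom c : A.obj.right) ∈ I) : c = 0 := by
  have := ca_nontrivial A
  by_contra hne
  have hu : IsUnit (A.obj.hom c : A.obj.right) :=
    (isUnit_iff_ne_zero.mpr hne).map A.obj.hom.hom
  have : I = ⊤ := Ideal.eq_top_of_isUnit_mem I hc hu
  rw [this, Ideal.top_mul] at hI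
  exact top_ne_bot hI

-- squares of elements of I vanish (more generally products)
lemma mul_I_zero (hI : I * I = ⊥) {x y : A.obj.right} (hx : x ∈ I) (hy : y ∈ I) : x * y = 0 := by
  have : x * y ∈ I * I := Ideal.mul_mem_mul hx hy
  rwa [hI, Ideal.mem_bot] at this

end Aux

section Aux2
variable {k : Type} [Field k]

/-- the structure morphism as a ring hom -/
def homk (A : Ca k) : k →+* A.obj.right := A.obj.hom.hom

lemma homk_show (A : Ca k) (c : k) :
    (show A.obj.right from A.obj.hom c) = homk A c := rfl

variable {A E : Ca k} (I : Ideal A.obj.right) (ι : E ⟶ A)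

/-- abbreviation for the range hypothesis -/
def RangeHyp : Prop :=
  Set.range (ι.hom.right : E.obj.right → A.obj.right) =
    {a : A.obj.right | ∃ (c : k) (x : A.obj.right), x ∈ I ∧
      a = (show A.obj.right from A.obj.hom c) + x}

lemma exists_decomp (hr : RangeHyp I ι) (e : E.obj.right) :
    ∃ (c : k) (x : A.obj.right), x ∈ I ∧ ι.hom.right e = homk A c + x := by
  have h : ι.hom.right e ∈ Set.range (ι.hom.right : E.obj.right → A.obj.right) := ⟨e, rfl⟩
  rw [hr] at h; exact h

lemma decomp_unique (hI : I * I = ⊥) {c c' : k} {x x' : A.obj.right}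
    (hx : x ∈ I) (hx' : x' ∈ I)
    (h : homk A c + x = homk A c' + x') : c = c' := by
  have hmem : homk A (c - c') ∈ I := by
    have h2 : homk A (c - c') = x' - x := by
      rw [map_sub]; linear_combination h
    rw [h2]; exact I.sub_mem hx' hx
  exact sub_eq_zero.mp (hom_k_mem_I_eq_zero A I hI _ hmem)

/-- the residue of an element of `E`. -/
noncomputable def rho (hr : RangeHyp I ι) (e : E.obj.right) : k :=
  (exists_decomp I ι hr e).choose

lemma rho_spec (hr : RangeHyp I ι) (e : E.obj.right) :
    ∃ x ∈ I, ι.hom.right e = homk A (rho I ι hr e) + x := by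
  obtain ⟨x, hx, h⟩ := (exists_decomp I ι hr e).choose_spec
  exact ⟨x, hx, h⟩

lemma rho_eq (hr : RangeHyp I ι) (hI : I * I = ⊥) (e : E.obj.right)
    {c : k} {x : A.obj.right} (hx : x ∈ I)
    (h : ι.hom.right e = homk A c + x) : rho I ι hr e = c := by
  obtain ⟨x', hx', h'⟩ := rho_spec I ι hr e
  exact decomp_unique I hI hx' hx (h'.symm.trans h)

set_option maxHeartbeats 1000000 in
/-- the residue map `E → k` as a ring hom. -/
noncomputable def rhoHom (hr : RangeHyp I ι) (hI : I * I = ⊥) : E.obj.right →+* k where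
  toFun := rho I ι hr
  map_one' := by
    refine rho_eq I ι hr hI _ (x := 0) I.zero_mem ?_
    rw [map_one, map_one, add_zero]
  map_mul' := fun e e' => by
    obtain ⟨x, hx, h⟩ := rho_spec I ι hr e
    obtain ⟨x', hx', h'⟩ := rho_spec I ι hr e'
    refine rho_eq I ι hr hI _ (x := homk A (rho I ι hr e) * x'
      + homk A (rho I ι hr e') * x) (I.add_mem (I.mul_mem_left _ hx') (I.mul_mem_left _ hx)) ?_
    rw [map_mul, h, h', map_mul]
    linear_combination mul_I_zero A I hI hx hx'
  map_zero' := by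
    refine rho_eq I ι hr hI _ (x := 0) I.zero_mem ?_
    rw [map_zero, map_zero, add_zero]
  map_add' := fun e e' => by
    obtain ⟨x, hx, h⟩ := rho_spec I ι hr e
    obtain ⟨x', hx', h'⟩ := rho_spec I ι hr e'
    refine rho_eq I ι hr hI _ (x := x + x') (I.add_mem hx hx') ?_
    rw [map_add, h, h', map_add]; ring

lemma rho_hom_k (hr : RangeHyp I ι) (hI : I * I = ⊥) (c : k) :
    rho I ι hr (E.obj.hom c) = c := by
  refine rho_eq I ι hr hI _ (x := 0) I.zero_mem ?_
  rw [add_zero]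
  exact caHom_w ι c

end Aux2

section DK
variable {k : Type} [Field k] {A B : Ca k} (π : A ⟶ B) (I : Ideal A.obj.right)

/-- the fibre product `A ×_B A` as a subalgebra of `A × A`. -/
def Dalg : Subalgebra A.obj.right (A.obj.right × A.obj.right) where
  carrier := {p | π.hom.right p.1 = π.hom.right p.2}
  mul_mem' := by
    intro p q hp hq
    show π.hom.right (p.1 * q.1) = π.hom.right (p.2 * q.2)
    rw [map_mul, map_mul, Set.mem_setOf_eq.mp hp, Set.mem_setOf_eq.mp hq]
  add_mem' := by
    intro p q hp hq
    show π.hom.right (p.1 + q.1) = π.hom.right (p.2 + q.2)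
    rw [map_add, map_add, Set.mem_setOf_eq.mp hp, Set.mem_setOf_eq.mp hq]
  algebraMap_mem' := fun r => rfl

lemma mem_Dalg {p : A.obj.right × A.obj.right} :
    p ∈ Dalg π ↔ π.hom.right p.1 = π.hom.right p.2 := Iff.rfl

variable (hI : I * I = ⊥) (hπk : ∀ a : A.obj.right, π.hom.right a = 0 ↔ a ∈ I)

include hI hπk in
lemma isUnit_D_iff (d : ↥(Dalg π)) :
    IsUnit d ↔ IsUnit (d : A.obj.right × A.obj.right).1 := by
  constructor
  · intro h
    exact h.map ((RingHom.fst _ _).comp (Dalg π).val.toRingHom)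
  · intro h
    have hd : π.hom.right (d : A.obj.right × A.obj.right).1
        = π.hom.right (d : A.obj.right × A.obj.right).2 := d.2
    set a := (d : A.obj.right × A.obj.right).1 with ha
    set b := (d : A.obj.right × A.obj.right).2 with hb
    have hba : b - a ∈ I := (hπk _).mp (by rw [map_sub, hd, sub_self])
    have hnil : IsNilpotent (b - a) := ⟨2, by rw [sq]; exact mul_I_zero A I hI hba hba⟩
    have hub : IsUnit b := by
      have := hnil.isUnit_add_right_of_commute h (Commute.all _ _)
      rwa [show b - a + a = b by ring] at this
    obtain ⟨u, hu⟩ := h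
    obtain ⟨v, hv⟩ := hub
    have hmem : ((↑u⁻¹ : A.obj.right), (↑v⁻¹ : A.obj.right)) ∈ Dalg π := by
      rw [mem_Dalg]
      have hmaps : Units.map π.hom.right.hom.toMonoidHom u
          = Units.map π.hom.right.hom.toMonoidHom v := by
        apply Units.ext
        show π.hom.right ↑u = π.hom.right ↑v
        rw [hu, hv, hd]
      show π.hom.right ↑u⁻¹ = π.hom.right ↑v⁻¹
      calc π.hom.right ↑u⁻¹
          = ↑(Units.map π.hom.right.hom.toMonoidHom u)⁻¹ :=
            (Units.coe_map_inv _ u).symm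
        _ = ↑(Units.map π.hom.right.hom.toMonoidHom v)⁻¹ := by
            rw [hmaps]
        _ = π.hom.right ↑v⁻¹ := Units.coe_map_inv _ v
    refine isUnit_iff_exists_inv.mpr ⟨⟨_, hmem⟩, ?_⟩
    apply Subtype.ext
    show ((d : A.obj.right × A.obj.right).1 * ↑u⁻¹,
      (d : A.obj.right × A.obj.right).2 * ↑v⁻¹) = (1, 1)
    rw [← ha, ← hb, ← hu, ← hv, u.mul_inv, v.mul_inv]

lemma nontrivial_D : Nontrivial ↥(Dalg π) := by
  have := ca_nontrivial A
  refine nontrivial_of_ne 0 1 (fun h => ?_)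
  have h2 : ((0 : ↥(Dalg π)) : A.obj.right × A.obj.right)
      = ((1 : ↥(Dalg π)) : A.obj.right × A.obj.right) := congrArg Subtype.val h
  exact zero_ne_one (congrArg Prod.fst h2)

include hI hπk in
lemma isLocalRing_D : IsLocalRing ↥(Dalg π) := by
  have := nontrivial_D π
  have := A.property.2.1
  refine IsLocalRing.of_isUnit_or_isUnit_one_sub_self (fun d => ?_)
  rcases IsLocalRing.isUnit_or_isUnit_one_sub_self
      ((d : A.obj.right × A.obj.right).1) with h | h
  · exact Or.inl ((isUnit_D_iff π I hI hπk d).mpr h)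
  · refine Or.inr ((isUnit_D_iff π I hI hπk _).mpr ?_)
    exact h

lemma isArtinianRing_D : IsArtinianRing ↥(Dalg π) := by
  have h1 : IsArtinianRing A.obj.right := A.property.1
  have h2 : IsArtinian A.obj.right (A.obj.right × A.obj.right) := isArtinian_prod
  have h3 : IsArtinian A.obj.right ↥(Dalg π) :=
    isArtinian_submodule' (Subalgebra.toSubmodule (Dalg π))
  exact isArtinian_of_tower A.obj.right h3

/-- the structure map `k → D`. -/
noncomputable def homkD : k →+* ↥(Dalg π) :=
  RingHom.codRestrict ((algebraMap A.obj.right (A.obj.right × A.obj.right)).comp (homk A))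
    (Dalg π) (fun c => rfl)

end DK

section Objects
variable {k : Type} [Field k] {A E B : Ca k} (π : A ⟶ B) (I : Ideal A.obj.right)
variable (hI : I * I = ⊥) (hπk : ∀ a : A.obj.right, π.hom.right a = 0 ↔ a ∈ I)

include hI hπk in
lemma residue_D : ∀ d : ↥(Dalg π), ∃! c : k, (d - homkD π c) ∈ nonunits ↥(Dalg π) := by
  intro d
  obtain ⟨c, hc, hcu⟩ := A.property.2.2 (d : A.obj.right × A.obj.right).1
  have key : ∀ c' : k, (d - homkD π c') ∈ nonunits ↥(Dalg π) ↔
      ((d : A.obj.right × A.obj.right).1 - homk A c') ∈ nonunits A.obj.right := by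
    intro c'
    rw [mem_nonunits_iff, mem_nonunits_iff, not_iff_not]
    exact isUnit_D_iff π I hI hπk _
  exact ⟨c, (key c).mpr hc, fun c' h => hcu c' ((key c').mp h)⟩

include hI hπk in
lemma caProp_D : CaProp k (Under.mk (CommRingCat.ofHom (homkD π))) :=
  ⟨isArtinianRing_D π, isLocalRing_D π I hI hπk, fun d => residue_D π I hI hπk d⟩

/-- the fibre product `A ×_B A` as an object of `C_a`. -/
noncomputable def DCa : Ca k := ⟨Under.mk (CommRingCat.ofHom (homkD π)), caProp_D π I hI hπk⟩

@[simp] lemma DCa_right : ((DCa π I hI hπk).obj.right : Type) = ↥(Dalg π) := rfl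

/-- identity conversion -/
def toD : ((DCa π I hI hπk).obj.right : Type) → ↥(Dalg π) := fun d => d

/-- first projection `D ⟶ A`. -/
noncomputable def p1 : DCa π I hI hπk ⟶ A :=
  caHomMk ((RingHom.fst _ _).comp (Dalg π).val.toRingHom) (fun c => rfl)

/-- second projection `D ⟶ A`. -/
noncomputable def p2 : DCa π I hI hπk ⟶ A :=
  caHomMk ((RingHom.snd _ _).comp (Dalg π).val.toRingHom) (fun c => rfl)

/-- the object `k` of `C_a`. -/
def K0 : Ca k := by
  refine ⟨Under.mk (𝟙 (CommRingCat.of k)), inferInstanceAs (IsArtinianRing k),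
    inferInstanceAs (IsLocalRing k), fun a => ?_⟩
  refine ⟨a, ?_, fun c hc => ?_⟩
  · show ¬ IsUnit (a - a)
    rw [sub_self]
    exact fun h => (not_isUnit_zero : ¬ IsUnit (0 : k)) h
  · beta_reduce at hc
    have hc2 : ¬ IsUnit ((show k from a) - c) := hc
    rw [isUnit_iff_ne_zero, not_ne_iff, sub_eq_zero] at hc2
    exact hc2.symm

lemma K0_trivial : ∀ a : (K0 (k := k)).obj.right, ∃! c : k, a = (K0 (k := k)).obj.hom c :=
  fun a => ⟨a, rfl, fun c hc => hc.symm⟩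

/-- the structure morphism `K0 ⟶ X` for any `X`. -/
def fromK0 (X : Ca k) : K0 (k := k) ⟶ X :=
  caHomMk (homk X) (fun c => rfl)

end Objects

section Mor
variable {k : Type} [Field k] {A E B : Ca k} (π : A ⟶ B) (I : Ideal A.obj.right) (ι : E ⟶ A)
variable (hr : RangeHyp I ι) (hI : I * I = ⊥) (hπk : ∀ a : A.obj.right, π.hom.right a = 0 ↔ a ∈ I)

lemma caHom_ext {X Y : Ca k} {f g : X ⟶ Y} (h : ∀ x : X.obj.right, f.hom.right x = g.hom.right x) :
    f = g :=
  by apply ObjectProperty.hom_ext; exact Under.UnderMorphism.ext (by ext x; exact h x)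

/-- the residue morphism `E ⟶ K0`. -/
noncomputable def eK : E ⟶ K0 (k := k) :=
  caHomMk (rhoHom I ι hr hI) (fun c => rho_hom_k I ι hr hI c)

/-- the morphism `E ⟶ D`, `e ↦ (ι e, ρ(e)·1)`. -/
noncomputable def jED : E ⟶ DCa π I hI hπk := by
  refine caHomMk (RingHom.codRestrict
    (ι.hom.right.hom.prod ((homk A).comp (rhoHom I ι hr hI)))
    (Dalg π) (fun e => ?_)) (fun c => ?_)
  · rw [mem_Dalg]
    obtain ⟨x, hx, h⟩ := rho_spec I ι hr e
    show π.hom.right (ι.hom.right e) = π.hom.right (homk A (rhoHom I ι hr hI e))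
    have : rhoHom I ι hr hI e = rho I ι hr e := rfl
    rw [this, h, map_add, (hπk x).mpr hx, add_zero]
  · apply Subtype.ext
    show (ι.hom.right (E.obj.hom c), homk A (rhoHom I ι hr hI (E.obj.hom c))) = (homk A c, homk A c)
    rw [caHom_w ι c]
    have : rhoHom I ι hr hI (E.obj.hom c) = c := rho_hom_k I ι hr hI c
    rw [this]
    rfl

lemma jED_p1 : jED π I ι hr hI hπk ≫ p1 π I hI hπk = ι :=
  caHom_ext (fun _ => rfl)

lemma jED_p2 : jED π I ι hr hI hπk ≫ p2 π I hI hπk = eK I ι hr hI ≫ fromK0 A :=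
  caHom_ext (fun _ => rfl)

include hr hπk in
lemma iota_pi : ι ≫ π = eK I ι hr hI ≫ fromK0 B := by
  refine caHom_ext (fun e => ?_)
  obtain ⟨x, hx, h⟩ := rho_spec I ι hr e
  show π.hom.right (ι.hom.right e) = (eK I ι hr hI ≫ fromK0 B).hom.right e
  have h2 : (eK I ι hr hI ≫ fromK0 B).hom.right e = homk B (rho I ι hr e) := rfl
  rw [h2, h, map_add, (hπk x).mpr hx, add_zero]
  show π.hom.right (homk A (rho I ι hr e)) = homk B (rho I ι hr e)
  exact caHom_w π _

lemma p1_pi : p1 π I hI hπk ≫ π = p2 π I hI hπk ≫ π := by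
  refine caHom_ext (fun d => ?_)
  exact d.2

end Mor

section Cones
variable {k : Type} [Field k] {A E B : Ca k} (π : A ⟶ B) (I : Ideal A.obj.right) (ι : E ⟶ A)
variable (hr : RangeHyp I ι) (hI : I * I = ⊥) (hπk : ∀ a : A.obj.right, π.hom.right a = 0 ↔ a ∈ I)
  (hinj : Function.Injective (ι.hom.right : E.obj.right → A.obj.right))

/-- the cone exhibiting `D` as the fibre product `A ×_B A`. -/
noncomputable def isLimit1 :
    IsLimit (PullbackCone.mk (p1 π I hI hπk) (p2 π I hI hπk) (p1_pi π I hI hπk)) := by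
  refine PullbackCone.IsLimit.mk _ (fun s => ?_) (fun s => ?_) (fun s => ?_) (fun s m h1 h2 => ?_)
  · -- lift
    refine caHomMk (RingHom.codRestrict
      (s.fst.hom.right.hom.prod
        s.snd.hom.right.hom) (Dalg π) (fun t => ?_)) (fun c => ?_)
    · rw [mem_Dalg]
      show (s.fst ≫ π).hom.right t = (s.snd ≫ π).hom.right t
      rw [s.condition]
    · apply Subtype.ext
      show (s.fst.hom.right (s.pt.obj.hom c), s.snd.hom.right (s.pt.obj.hom c)) = (homk A c, homk A c)
      rw [caHom_w s.fst c, caHom_w s.snd c]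
      rfl
  · exact caHom_ext (fun t => rfl)
  · exact caHom_ext (fun t => rfl)
  · refine caHom_ext (fun t => ?_)
    apply Subtype.ext
    have e1 : ((toD π I hI hπk (m.hom.right t)) : A.obj.right × A.obj.right).1 = s.fst.hom.right t :=
      congrArg (fun f : s.pt ⟶ A => f.hom.right t) h1
    have e2 : ((toD π I hI hπk (m.hom.right t)) : A.obj.right × A.obj.right).2 = s.snd.hom.right t :=
      congrArg (fun f : s.pt ⟶ A => f.hom.right t) h2
    exact Prod.ext e1 e2

/-- a function underlying a ring hom through an injective ring hom is a ring hom -/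
def ringHomOfInjComp {R S T : Type*} [CommRing R] [CommRing S] [CommRing T]
    (w : R → S) (i : S →+* T) (hi : Function.Injective i) (u : R →+* T)
    (h : ∀ x, i (w x) = u x) : R →+* S where
  toFun := w
  map_one' := hi (by rw [h, map_one, map_one])
  map_mul' x y := hi (by rw [h, map_mul, map_mul, h, h])
  map_zero' := hi (by rw [h, map_zero, map_zero])
  map_add' x y := hi (by rw [h, map_add, map_add, h, h])

include hr hπk in
lemma lift2_mem {T : Ca k} (s1 : T ⟶ DCa π I hI hπk) (s2 : T ⟶ K0 (k := k))
    (hcond : s1 ≫ p2 π I hI hπk = s2 ≫ fromK0 A) (t : T.obj.right) :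
    ∃ e : E.obj.right,
      ι.hom.right e = ((toD π I hI hπk (s1.hom.right t)) : A.obj.right × A.obj.right).1 := by
  set a := ((toD π I hI hπk (s1.hom.right t)) : A.obj.right × A.obj.right).1 with ha
  set b := ((toD π I hI hπk (s1.hom.right t)) : A.obj.right × A.obj.right).2 with hb
  have hab : π.hom.right a = π.hom.right b := (mem_Dalg π).mp (toD π I hI hπk (s1.hom.right t)).2
  have hb2 : b = homk A (s2.hom.right t) := congrArg (fun f : T ⟶ A => f.hom.right t) hcond
  have hmem : a - homk A (s2.hom.right t) ∈ I := by
    refine (hπk _).mp ?_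
    rw [map_sub, ← hb2, hab, sub_self]
  have : a ∈ Set.range (ι.hom.right : E.obj.right → A.obj.right) := by
    rw [hr]
    exact ⟨s2.hom.right t, a - homk A (s2.hom.right t), hmem, by show a = homk A _ + _; ring⟩
  exact this

/-- underlying function of the lift to `E` -/
noncomputable def lift2fun {T : Ca k} (s1 : T ⟶ DCa π I hI hπk) (s2 : T ⟶ K0 (k := k))
    (hcond : s1 ≫ p2 π I hI hπk = s2 ≫ fromK0 A) (t : T.obj.right) : E.obj.right :=
  (lift2_mem π I ι hr hI hπk s1 s2 hcond t).choose

lemma lift2fun_spec {T : Ca k} (s1 : T ⟶ DCa π I hI hπk) (s2 : T ⟶ K0 (k := k))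
    (hcond : s1 ≫ p2 π I hI hπk = s2 ≫ fromK0 A) (t : T.obj.right) :
    ι.hom.right (lift2fun π I ι hr hI hπk s1 s2 hcond t)
      = ((toD π I hI hπk (s1.hom.right t)) : A.obj.right × A.obj.right).1 :=
  (lift2_mem π I ι hr hI hπk s1 s2 hcond t).choose_spec

/-- the lift to `E` as a morphism -/
noncomputable def lift2 {T : Ca k} (s1 : T ⟶ DCa π I hI hπk) (s2 : T ⟶ K0 (k := k))
    (hcond : s1 ≫ p2 π I hI hπk = s2 ≫ fromK0 A) : T ⟶ E := by
  refine caHomMk (ringHomOfInjComp (lift2fun π I ι hr hI hπk s1 s2 hcond)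
    ι.hom.right.hom hinj
    (((RingHom.fst _ _).comp (Dalg π).val.toRingHom).comp
      (s1.hom.right.hom : T.obj.right →+* ↥(Dalg π)))
    (fun t => lift2fun_spec π I ι hr hI hπk s1 s2 hcond t)) (fun c => hinj ?_)
  show ι.hom.right (lift2fun π I ι hr hI hπk s1 s2 hcond (T.obj.hom c)) = ι.hom.right (E.obj.hom c)
  rw [lift2fun_spec π I ι hr hI hπk s1 s2 hcond, caHom_w s1 c, caHom_w ι c]
  rfl

lemma lift2_rho {T : Ca k} (s1 : T ⟶ DCa π I hI hπk) (s2 : T ⟶ K0 (k := k))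
    (hcond : s1 ≫ p2 π I hI hπk = s2 ≫ fromK0 A) (t : T.obj.right) :
    rho I ι hr (lift2fun π I ι hr hI hπk s1 s2 hcond t) = s2.hom.right t := by
  set a := ((toD π I hI hπk (s1.hom.right t)) : A.obj.right × A.obj.right).1 with ha
  have hb2 : ((toD π I hI hπk (s1.hom.right t)) : A.obj.right × A.obj.right).2
      = homk A (s2.hom.right t) := congrArg (fun f : T ⟶ A => f.hom.right t) hcond
  have hmem : a - homk A (s2.hom.right t) ∈ I := by
    refine (hπk _).mp ?_
    rw [map_sub, ← hb2, (mem_Dalg π).mp (toD π I hI hπk (s1.hom.right t)).2, sub_self]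
  refine rho_eq I ι hr hI _ hmem ?_
  rw [lift2fun_spec π I ι hr hI hπk s1 s2 hcond, ← ha]
  ring

/-- the cone exhibiting `E` as the fibre product `D ×_A K0`. -/
noncomputable def isLimit2 :
    IsLimit (PullbackCone.mk (jED π I ι hr hI hπk) (eK I ι hr hI)
      (jED_p2 π I ι hr hI hπk)) := by
  refine PullbackCone.IsLimit.mk _
    (fun s => lift2 π I ι hr hI hπk hinj s.fst s.snd s.condition)
    (fun s => ?_) (fun s => ?_) (fun s m h1 h2 => ?_)
  · refine caHom_ext (fun t => ?_)
    apply Subtype.ext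
    refine Prod.ext ?_ ?_
    · exact lift2fun_spec π I ι hr hI hπk s.fst s.snd s.condition t
    · show homk A (rho I ι hr (lift2fun π I ι hr hI hπk s.fst s.snd s.condition t))
        = ((toD π I hI hπk (s.fst.hom.right t)) : A.obj.right × A.obj.right).2
      rw [lift2_rho π I ι hr hI hπk s.fst s.snd s.condition t]
      exact (congrArg (fun f : s.pt ⟶ A => f.hom.right t) s.condition).symm
  · refine caHom_ext (fun t => ?_)
    exact lift2_rho π I ι hr hI hπk s.fst s.snd s.condition t
  · refine caHom_ext (fun t => ?_)
    apply hinj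
    have e1 : ((toD π I hI hπk ((m ≫ jED π I ι hr hI hπk).hom.right t))
        : A.obj.right × A.obj.right).1
        = ((toD π I hI hπk (s.fst.hom.right t)) : A.obj.right × A.obj.right).1 :=
      congrArg (fun f : s.pt ⟶ DCa π I hI hπk =>
        ((toD π I hI hπk (f.hom.right t)) : A.obj.right × A.obj.right).1) h1
    have e2 : ι.hom.right (m.hom.right t)
        = ((toD π I hI hπk ((m ≫ jED π I ι hr hI hπk).hom.right t))
          : A.obj.right × A.obj.right).1 := rfl
    rw [e2, e1]
    exact (lift2fun_spec π I ι hr hI hπk s.fst s.snd s.condition t).symm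

end Cones

section TypesPB
variable {W X Y Z : Type} {f : X ⟶ Z} {g : Y ⟶ Z} {fst : W ⟶ X} {snd : W ⟶ Y}
  {comm : fst ≫ f = snd ≫ g}

lemma type_pb_exists (hc : IsLimit (PullbackCone.mk fst snd comm)) (x : X) (y : Y)
    (h : f x = g y) : ∃ w : W, fst w = x ∧ snd w = y := by
  refine ⟨PullbackCone.IsLimit.lift hc (TypeCat.ofHom (fun _ : PUnit => x)) (TypeCat.ofHom (fun _ : PUnit => y))
    (by ext; exact h) PUnit.unit, ?_, ?_⟩
  · exact ConcreteCategory.congr_hom (PullbackCone.IsLimit.lift_fst hc (TypeCat.ofHom (fun _ : PUnit => x)) (TypeCat.ofHom (fun _ : PUnit => y))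
      (by ext; exact h)) PUnit.unit
  · exact ConcreteCategory.congr_hom (PullbackCone.IsLimit.lift_snd hc (TypeCat.ofHom (fun _ : PUnit => x)) (TypeCat.ofHom (fun _ : PUnit => y))
      (by ext; exact h)) PUnit.unit

lemma type_pb_unique (hc : IsLimit (PullbackCone.mk fst snd comm)) {w w' : W}
    (h1 : fst w = fst w') (h2 : snd w = snd w') : w = w' := by
  have := PullbackCone.IsLimit.hom_ext hc
    (k := TypeCat.ofHom (fun _ : PUnit => w)) (l := TypeCat.ofHom (fun _ : PUnit => w'))
    (by ext; exact h1) (by ext; exact h2)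
  exact ConcreteCategory.congr_hom this PUnit.unit

end TypesPB

section Pres
variable {k : Type} [Field k]

lemma preservesFiniteLimits_of_proRep (G : Ca k ⥤ Type) (h : ProRepresentable G) :
    PreservesFiniteLimits G := by
  obtain ⟨I0, i1, i2, S, ⟨Φ⟩⟩ := h
  haveI : ∀ i : I0, PreservesFiniteLimits ((S ⋙ coyoneda).obj i) := fun i =>
    inferInstanceAs (PreservesFiniteLimits (coyoneda.obj (S.obj i)))
  haveI h1 : PreservesFiniteLimits ((S ⋙ coyoneda).flip) :=
    preservesFiniteLimits_of_evaluation _ (fun i =>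
      preservesFiniteLimits_of_natIso (flipCompEvaluation (S ⋙ coyoneda) i).symm)
  haveI h2 : PreservesFiniteLimits ((S ⋙ coyoneda).flip ⋙ colim) :=
    comp_preservesFiniteLimits _ _
  exact preservesFiniteLimits_of_natIso
    (Φ ≪≫ colimitIsoFlipCompColim (S ⋙ coyoneda)).symm

end Pres

/-- Exactness of `0 → F(k[I]) → F(A) → F(A/I) → 0` for a formal group functor `F`
(pro-representable, smooth, with `F(k)` trivial) on `C_a`, where `A ∈ C_a`, `I ⊆ A` is
an ideal with `I² = 0`, `E ≅ k[I] = k ⊕ I` is the square-zero extension embedded in `A`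
via `ι : (c, i) ↦ c·1 + i`, and `π : A → B ≅ A/I` is the quotient map. -/
theorem formal_group_functor_exact_sequence
    {k : Type} [Field k] (F : Ca k ⥤ GrpCat)
    (hFpro : ProRepresentable (F ⋙ forget GrpCat))
    (hFk : ∀ K : Ca k, (∀ a : K.obj.right, ∃! c : k, a = K.obj.hom c) →
      Subsingleton (F.obj K))
    (hFsmooth : ∀ {X Y : Ca k} (p : Y ⟶ X),
      Function.Surjective (p.hom.right : Y.obj.right → X.obj.right) →
      Function.Surjective ((forget GrpCat).map (F.map p)))
    (A E B : Ca k) (I : Ideal A.obj.right) (hI : I * I = ⊥)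
    (ι : E ⟶ A)
    (hι : Function.Injective (ι.hom.right : E.obj.right → A.obj.right) ∧
      Set.range (ι.hom.right : E.obj.right → A.obj.right) =
        {a : A.obj.right | ∃ (c : k) (x : A.obj.right), x ∈ I ∧
          a = (show A.obj.right from A.obj.hom c) + x})
    (π : A ⟶ B)
    (hπ : Function.Surjective (π.hom.right : A.obj.right → B.obj.right) ∧
      ∀ a : A.obj.right, (π.hom.right : A.obj.right → B.obj.right) a = 0 ↔ a ∈ I) :
    Function.Injective ((forget GrpCat).map (F.map ι)) ∧
    Function.Surjective ((forget GrpCat).map (F.map π)) ∧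
    Set.range ((forget GrpCat).map (F.map ι)) =
      {x : F.obj A | (forget GrpCat).map (F.map π) x = (1 : F.obj B)} := by
  obtain ⟨hιinj, hιr⟩ := hι
  obtain ⟨hπs, hπk⟩ := hπ
  have hr : RangeHyp I ι := hιr
  haveI : PreservesFiniteLimits (F ⋙ forget GrpCat) := preservesFiniteLimits_of_proRep _ hFpro
  haveI hK0 : Subsingleton (F.obj (K0 (k := k))) := hFk _ K0_trivial
  set G := F ⋙ forget GrpCat with hG
  have L1 := isLimitPullbackConeMapOfIsLimit G (p1_pi π I hI hπk) (isLimit1 π I hI hπk)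
  have L2 := isLimitPullbackConeMapOfIsLimit G (jED_p2 π I ι hr hI hπk)
    (isLimit2 π I ι hr hI hπk hιinj)
  -- composition at the level of elements
  have comp_eq : ∀ {X Y Z : Ca k} (f : X ⟶ Y) (g : Y ⟶ Z) (x : G.obj X),
      G.map (f ≫ g) x = G.map g (G.map f x) := by
    intro X Y Z f g x
    rw [Functor.map_comp]
    rfl
  -- triviality of F(K0)
  have hK0' : Subsingleton (G.obj (K0 (k := k))) := hK0
  have triv : ∀ z : G.obj (K0 (k := k)), z = (1 : F.obj (K0 (k := k))) :=
    fun z => hK0'.allEq z _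
  have mone : ∀ {X Y : Ca k} (f : X ⟶ Y), G.map f (1 : F.obj X) = (1 : F.obj Y) := by
    intro X Y f
    exact map_one (F.map f).hom
  -- key: G.map eK y is always 1, so composites through K0 are trivial
  have through : ∀ (y : G.obj E), G.map (ι ≫ π) y = (1 : F.obj B) := by
    intro y
    rw [iota_pi π I ι hr hI hπk, comp_eq]
    rw [triv (G.map (eK I ι hr hI) y)]
    exact mone _
  have GjED_p1 : ∀ y : G.obj E, G.map (p1 π I hI hπk) (G.map (jED π I ι hr hI hπk) y)
      = G.map ι y := by
    intro y
    rw [← comp_eq, jED_p1 π I ι hr hI hπk]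
  have GjED_p2 : ∀ y : G.obj E, G.map (p2 π I hI hπk) (G.map (jED π I ι hr hI hπk) y)
      = (1 : F.obj A) := by
    intro y
    rw [← comp_eq, jED_p2 π I ι hr hI hπk, comp_eq, triv (G.map (eK I ι hr hI) y)]
    exact mone _
  refine ⟨?_, hFsmooth π hπs, ?_⟩
  · -- injectivity
    intro y y' h
    have hjed : G.map (jED π I ι hr hI hπk) y = G.map (jED π I ι hr hI hπk) y' := by
      refine type_pb_unique L1 ?_ ?_
      · show G.map (p1 π I hI hπk) _ = G.map (p1 π I hI hπk) _
        rw [GjED_p1, GjED_p1]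
        exact h
      · show G.map (p2 π I hI hπk) _ = G.map (p2 π I hI hπk) _
        rw [GjED_p2, GjED_p2]
    refine type_pb_unique L2 ?_ ?_
    · exact hjed
    · exact hK0'.allEq _ _
  · -- range = kernel
    ext x
    constructor
    · rintro ⟨y, rfl⟩
      show G.map π (G.map ι y) = (1 : F.obj B)
      rw [← comp_eq]
      exact through y
    · intro hx
      have hx' : G.map π x = G.map π (1 : F.obj A) := by
        rw [mone]
        exact hx
      obtain ⟨z, hz1, hz2⟩ := type_pb_exists L1 x (1 : F.obj A) hx'
      have hz2' : G.map (p2 π I hI hπk) z = G.map (fromK0 A) (1 : F.obj (K0 (k := k))) := by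
        rw [mone]
        exact hz2
      obtain ⟨y, hy1, hy2⟩ := type_pb_exists L2 z (1 : F.obj (K0 (k := k))) hz2'
      refine ⟨y, ?_⟩
      show G.map ι y = x
      rw [← GjED_p1, hy1]
      exact hz1
end

section
/- Let R be a commutative ring and f ∈ R((t)) an invertible Laurent series. Then the function on Spec R sending a prime p to the order of the image of f in κ(p)((t)) is locally constant; in particular if Spec R is connected, all residual orders of f are equal. -/
/-!
The order of `f mod p` is at most `n` exactly when some coefficient of `f` of index `≤ n` avoids
`p`, so `{p | ord (f mod p) ≤ n}` is a union of basic open sets. Applied to `f⁻¹`, whose residual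
orders are the negatives of those of `f`, this also makes `{p | n ≤ ord (f mod p)}` open, so every
fiber of `p ↦ ord (f mod p)` is open.
-/

open HahnSeries

/-- The residue field `κ(p)` at a prime `p` of `R`. -/
abbrev ResidueFieldAt {R : Type*} [CommRing R] (p : PrimeSpectrum R) : Type _ :=
  FractionRing (R ⧸ p.asIdeal)

/-- The canonical ring homomorphism `R → κ(p)`. -/
noncomputable def toResidueFieldAt {R : Type*} [CommRing R] (p : PrimeSpectrum R) :
    R →+* ResidueFieldAt p :=
  (algebraMap (R ⧸ p.asIdeal) (FractionRing (R ⧸ p.asIdeal))).comp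
    (Ideal.Quotient.mk p.asIdeal)

namespace HahnSeries

theorem order_le_iff_exists {Γ R : Type*} [Zero Γ] [LinearOrder Γ] [Zero R] {x : R⟦Γ⟧} {i : Γ}
    (h : x ≠ 0) : x.order ≤ i ↔ ∃ j ≤ i, x.coeff j ≠ 0 :=
  ⟨fun hi => ⟨x.order, hi, coeff_order_eq_zero.not.mpr h⟩,
    fun ⟨_, hj, hx⟩ => (order_le_of_coeff_ne_zero hx).trans hj⟩

end HahnSeries

section ResidualSeries

variable {R : Type*} [CommRing R]

theorem toResidueFieldAt_eq_zero_iff (p : PrimeSpectrum R) (x : R) :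
    toResidueFieldAt p x = 0 ↔ x ∈ p.asIdeal := by
  rw [toResidueFieldAt, RingHom.comp_apply, IsFractionRing.to_map_eq_zero_iff,
    Ideal.Quotient.eq_zero_iff_mem]

noncomputable def residualSeries {Γ : Type*} [PartialOrder Γ] (f : R⟦Γ⟧) (p : PrimeSpectrum R) :
    (ResidueFieldAt p)⟦Γ⟧ :=
  f.map (toResidueFieldAt p)

theorem residualSeries_one {Γ : Type*} [Zero Γ] [PartialOrder Γ] (p : PrimeSpectrum R) :
    residualSeries (1 : R⟦Γ⟧) p = 1 :=
  HahnSeries.map_one (toResidueFieldAt p).toMonoidWithZeroHom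

section Order

variable {Γ : Type*} [Zero Γ] [LinearOrder Γ]

theorem setOf_order_residualSeries_le {f : R⟦Γ⟧} (hf : ∀ p, residualSeries f p ≠ 0) (n : Γ) :
    {p | (residualSeries f p).order ≤ n} =
      ⋃ m ≤ n, (PrimeSpectrum.basicOpen (f.coeff m) : Set (PrimeSpectrum R)) := by
  ext p
  rw [Set.mem_ofPred_eq, order_le_iff_exists (hf p)]
  simp only [Set.mem_iUnion, exists_prop, SetLike.mem_coe, PrimeSpectrum.mem_basicOpen,
    residualSeries, map_coeff, ne_eq, toResidueFieldAt_eq_zero_iff]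

theorem isOpen_setOf_order_residualSeries_le {f : R⟦Γ⟧} (hf : ∀ p, residualSeries f p ≠ 0)
    (n : Γ) : IsOpen {p | (residualSeries f p).order ≤ n} := by
  rw [setOf_order_residualSeries_le hf]
  exact isOpen_biUnion fun m _ => (PrimeSpectrum.basicOpen (f.coeff m)).isOpen

end Order

section Units

variable {Γ : Type*} [AddCommMonoid Γ] [LinearOrder Γ] [IsOrderedCancelAddMonoid Γ]

theorem residualSeries_mul (f g : R⟦Γ⟧) (p : PrimeSpectrum R) :
    residualSeries (f * g) p = residualSeries f p * residualSeries g p :=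
  HahnSeries.map_mul (toResidueFieldAt p).toNonUnitalRingHom

theorem residualSeries_mul_eq_one {f g : R⟦Γ⟧} (hfg : f * g = 1) (p : PrimeSpectrum R) :
    residualSeries f p * residualSeries g p = 1 := by
  rw [← residualSeries_mul, hfg, residualSeries_one]

theorem order_residualSeries_add_eq_zero {f g : R⟦Γ⟧} (hfg : f * g = 1) (p : PrimeSpectrum R) :
    (residualSeries f p).order + (residualSeries g p).order = 0 := by
  have h := residualSeries_mul_eq_one hfg p
  rw [← order_mul (left_ne_zero_of_mul_eq_one h) (right_ne_zero_of_mul_eq_one h), h, order_one]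

theorem residualSeries_ne_zero_of_isUnit {f : R⟦Γ⟧} (hf : IsUnit f) (p : PrimeSpectrum R) :
    residualSeries f p ≠ 0 :=
  left_ne_zero_of_mul_eq_one (residualSeries_mul_eq_one hf.unit.mul_inv p)

end Units

theorem isLocallyConstant_order_residualSeries {Γ : Type*} [AddCommGroup Γ] [LinearOrder Γ]
    [IsOrderedAddMonoid Γ] {f : R⟦Γ⟧} (hf : IsUnit f) :
    IsLocallyConstant fun p => (residualSeries f p).order := by
  obtain ⟨u, rfl⟩ := hf
  rw [IsLocallyConstant.iff_isOpen_fiber]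
  intro n
  have fiber_eq : (fun p => (residualSeries (u : R⟦Γ⟧) p).order) ⁻¹' {n} =
      {p | (residualSeries (u : R⟦Γ⟧) p).order ≤ n} ∩
        {p | (residualSeries (↑u⁻¹ : R⟦Γ⟧) p).order ≤ -n} := by
    ext p
    have h_inv : (residualSeries (↑u⁻¹ : R⟦Γ⟧) p).order = -(residualSeries (u : R⟦Γ⟧) p).order :=
      eq_neg_of_add_eq_zero_right (order_residualSeries_add_eq_zero u.mul_inv p)
    simp only [Set.mem_preimage, Set.mem_singleton_iff, Set.mem_inter_iff, Set.mem_ofPred_eq,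
      h_inv, neg_le_neg_iff, le_antisymm_iff]
  rw [fiber_eq]
  exact (isOpen_setOf_order_residualSeries_le (residualSeries_ne_zero_of_isUnit u.isUnit) n).inter
    (isOpen_setOf_order_residualSeries_le (residualSeries_ne_zero_of_isUnit u⁻¹.isUnit) (-n))

end ResidualSeries

/-- For an invertible Laurent series `f ∈ R((t))`, the function
`p ↦ ord(f mod p) ∈ ℤ` on `Spec R` (order of the image of `f` in `κ(p)((t))`) is
locally constant; in particular, if `Spec R` is connected, all residual orders of `f`
are equal. -/
theorem residual_order_locallyConstant {R : Type*} [CommRing R]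
    (f : LaurentSeries R) (hf : IsUnit f) :
    IsLocallyConstant (fun p : PrimeSpectrum R =>
      (HahnSeries.map f (toResidueFieldAt p) : LaurentSeries (ResidueFieldAt p)).order) ∧
    (PreconnectedSpace (PrimeSpectrum R) →
      ∀ p q : PrimeSpectrum R,
        (HahnSeries.map f (toResidueFieldAt p) : LaurentSeries (ResidueFieldAt p)).order =
        (HahnSeries.map f (toResidueFieldAt q) : LaurentSeries (ResidueFieldAt q)).order) := by
  have h := isLocallyConstant_order_residualSeries hf
  exact ⟨h, fun _ p q => h.apply_eq_of_preconnectedSpace p q⟩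
end
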